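/- Let G = (V,E) be a directed mixed graph, let α, β ∈ V and C ⊆ V. If ω is a μ-connecting walk from α to β given C in G, then there exists a μ-connecting route from α to β given C consisting of edges occurring in ω, where a route from α to β is a walk from α to β such that no node different from β occurs more than once and β occurs at most twice. -/

import Mathlib

/-!
Directed mixed graphs (DMGs) with μ-separation, following
Mogensen & Hansen, "Markov equivalence of marginalized local independence graphs".
-/

universe u

/-- A directed mixed graph on node set `V`: a set of directed edges (`dir a b`
meaning `a → b`) and a set of bidirected edges (`bi`, a symmetric relation since
bidirected edges are unordered pairs).  Loops are allowed. -/
structure DMG (V : Type u) where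
  dir : V → V → Prop
  bi : V → V → Prop
  bi_symm : ∀ a b, bi a b → bi b a

namespace DMG

variable {V : Type u}

/-- A single step of a walk: an edge instance together with the direction in
which it is traversed (this records, in particular, orientations of loops).
A directed edge has a tail at its source and a head at its target; a bidirected
edge has heads at both endpoints. -/
inductive Step (G : DMG V) : V → V → Type u
  | dirF : ∀ {a b : V}, G.dir a b → Step G a b
  | dirB : ∀ {a b : V}, G.dir b a → Step G a b
  | bid  : ∀ {a b : V}, G.bi a b → Step G a b

/-- Whether the step has a head (edge mark) at its start node. -/
def Step.headStart {G : DMG V} : ∀ {a b : V}, Step G a b → Bool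
  | _, _, .dirF _ => false
  | _, _, .dirB _ => true
  | _, _, .bid _ => true

/-- Whether the step has a head (edge mark) at its end node. -/
def Step.headEnd {G : DMG V} : ∀ {a b : V}, Step G a b → Bool
  | _, _, .dirF _ => true
  | _, _, .dirB _ => false
  | _, _, .bid _ => true

/-- The step traverses a bidirected edge. -/
def Step.IsBid {G : DMG V} {a b : V} : Step G a b → Prop
  | .bid _ => True
  | _ => False

/-- The step traverses a directed edge, forwards. -/
def Step.IsDirF {G : DMG V} {a b : V} : Step G a b → Prop
  | .dirF _ => True
  | _ => False

/-- The underlying edge of a step: a directed edge is the ordered pair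
(tail, head); a bidirected edge is the unordered pair of its endpoints. -/
def Step.edge {G : DMG V} : ∀ {a b : V}, Step G a b → (V × V) ⊕ (Sym2 V)
  | a, b, .dirF _ => Sum.inl (a, b)
  | a, b, .dirB _ => Sum.inl (b, a)
  | a, b, .bid _ => Sum.inr s(a, b)

/-- A walk in a DMG: an alternating sequence of nodes and edges, each edge
between its neighbouring nodes, with a chosen orientation of each edge
(in particular of each directed loop). -/
inductive Walk (G : DMG V) : V → V → Type u
  | nil (a : V) : Walk G a a
  | cons {a b c : V} (s : Step G a b) (w : Walk G b c) : Walk G a c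

namespace Walk

variable {G : DMG V}

/-- A nontrivial walk contains at least one edge. -/
def Nontrivial : ∀ {a b : V}, Walk G a b → Prop
  | _, _, .nil _ => False
  | _, _, .cons _ _ => True

/-- The list of nodes of a walk, in order (with multiplicity). -/
def nodes : ∀ {a b : V}, Walk G a b → List V
  | a, _, .nil _ => [a]
  | a, _, .cons _ w => a :: w.nodes

/-- The non-endpoint (internal) nodes of a walk, in order (with multiplicity). -/
def interior {a b : V} (w : Walk G a b) : List V :=
  (w.nodes.dropLast).drop 1

/-- The list of edges of a walk. -/
def edges : ∀ {a b : V}, Walk G a b → List ((V × V) ⊕ (Sym2 V))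
  | _, _, .nil _ => []
  | _, _, .cons s w => s.edge :: w.edges

/-- Whether the first edge of the walk has a head at the first node
(`false` for a trivial walk). -/
def firstHead : ∀ {a b : V}, Walk G a b → Bool
  | _, _, .nil _ => false
  | _, _, .cons s _ => s.headStart

/-- Whether the last edge of the walk has a head at the last node
(`false` for a trivial walk). -/
def lastHead : ∀ {a b : V}, Walk G a b → Bool
  | _, _, .nil _ => false
  | _, _, .cons s (.nil _) => s.headEnd
  | _, _, .cons _ (.cons t w) => lastHead (Walk.cons t w)

/-- Helper: conditions at all remaining internal node instances of a walk,
where `h` records whether the edge arriving at the current start node has a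
head there.  A node instance is a collider if both adjoining edges have a
head at it; a collider must lie in `Anc`, a noncollider must avoid `C`. -/
def openFrom (C Anc : Set V) : ∀ {a b : V}, Bool → Walk G a b → Prop
  | _, _, _, .nil _ => True
  | a, _, h, .cons s w =>
      (if h && s.headStart then a ∈ Anc else a ∉ C) ∧ openFrom C Anc s.headEnd w

/-- Helper: every remaining internal node instance which is a collider lies in `S`. -/
def collInFrom (S : Set V) : ∀ {a b : V}, Bool → Walk G a b → Prop
  | _, _, _, .nil _ => True
  | a, _, h, .cons s w =>
      ((h && s.headStart) = true → a ∈ S) ∧ collInFrom S s.headEnd w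

/-- Every collider (internal node instance with heads on both sides) of the
walk lies in `S`. -/
def CollidersIn (S : Set V) : ∀ {a b : V}, Walk G a b → Prop
  | _, _, .nil _ => True
  | _, _, .cons s w => collInFrom S s.headEnd w

/-- The walk has no colliders. -/
def NoColliders {a b : V} (w : Walk G a b) : Prop :=
  w.CollidersIn ∅

/-- Helper: every remaining internal node instance is a collider. -/
def allCollFrom : ∀ {a b : V}, Bool → Walk G a b → Prop
  | _, _, _, .nil _ => True
  | _, _, h, .cons s w => (h && s.headStart) = true ∧ allCollFrom s.headEnd w

/-- Every internal node instance of the walk is a collider (no noncolliders). -/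
def AllColliders : ∀ {a b : V}, Walk G a b → Prop
  | _, _, .nil _ => True
  | _, _, .cons s w => allCollFrom s.headEnd w

/-- Every edge of the walk is bidirected. -/
def AllBid : ∀ {a b : V}, Walk G a b → Prop
  | _, _, .nil _ => True
  | _, _, .cons s w => s.IsBid ∧ w.AllBid

/-- The walk consists of a directed first edge (pointing forwards) followed by
bidirected edges only (the form `α → β` or `α → γ₁ ↔ ⋯ ↔ γₙ ↔ β`). -/
def UniForm : ∀ {a b : V}, Walk G a b → Prop
  | _, _, .nil _ => False
  | _, _, .cons s w => s.IsDirF ∧ w.AllBid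

end Walk

/-- `a` is an ancestor of `b`: there is a (possibly trivial) directed path
from `a` to `b`. -/
def anc (G : DMG V) (a b : V) : Prop := Relation.ReflTransGen G.dir a b

/-- The set of ancestors of nodes of `C`. -/
def anSet (G : DMG V) (C : Set V) : Set V := {a | ∃ c ∈ C, G.anc a c}

/-- The walk is μ-connecting given `C`: it is nontrivial, its first node is not
in `C`, every collider lies in `An(C)`, no noncollider lies in `C`, and its
final edge has a head at the final node. -/
def Walk.MuConn {G : DMG V} (C : Set V) : ∀ {a b : V}, Walk G a b → Prop
  | _, _, .nil _ => False
  | a, _, .cons s w =>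
      a ∉ C ∧ Walk.openFrom C (G.anSet C) s.headEnd w ∧ (Walk.cons s w).lastHead = true

/-- `B` is μ-separated from `A` given `C` in `G`: there is no μ-connecting
walk from any node of `A` to any node of `B` given `C`. -/
def muSep (G : DMG V) (A B C : Set V) : Prop :=
  ∀ ⦃a b : V⦄, a ∈ A → b ∈ B → ∀ w : Walk G a b, ¬ w.MuConn C

/-- Two DMGs on the same node set are Markov equivalent: they induce the same
independence model via μ-separation, i.e. `I(G₁) = I(G₂)`. -/
def MarkovEq (G₁ G₂ : DMG V) : Prop :=
  ∀ A B C : Set V, muSep G₁ A B C ↔ muSep G₂ A B C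

/-- `b` is separable from `a` in `I(G)`: there is `C ⊆ V ∖ {a}` with
`⟨{a},{b} | C⟩ ∈ I(G)`. -/
def separable (G : DMG V) (a b : V) : Prop :=
  ∃ C : Set V, a ∉ C ∧ muSep G {a} {b} C

/-- `a ∈ u(b, I(G))`: `b` is inseparable from `a` in `I(G)`. -/
def inU (G : DMG V) (a b : V) : Prop := ¬ G.separable a b

/-- `G₁` is a subgraph of `G₂` (same node set, edge-set inclusion). -/
def Sub (G₁ G₂ : DMG V) : Prop :=
  (∀ a b, G₁.dir a b → G₂.dir a b) ∧ (∀ a b, G₁.bi a b → G₂.bi a b)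

/-- The DMG obtained by adding the directed edge `a → b`. -/
def addDir (G : DMG V) (a b : V) : DMG V where
  dir x y := G.dir x y ∨ (x = a ∧ y = b)
  bi := G.bi
  bi_symm := G.bi_symm

/-- The DMG obtained by adding the bidirected edge `a ↔ b`. -/
def addBi (G : DMG V) (a b : V) : DMG V where
  dir := G.dir
  bi x y := G.bi x y ∨ (x = a ∧ y = b) ∨ (x = b ∧ y = a)
  bi_symm x y h := by
    rcases h with h | h | h
    · exact Or.inl (G.bi_symm _ _ h)
    · exact Or.inr (Or.inr ⟨h.2, h.1⟩)
    · exact Or.inr (Or.inl ⟨h.2, h.1⟩)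

/-- The DMG obtained by removing the directed edge `a → b`. -/
def removeDir (G : DMG V) (a b : V) : DMG V where
  dir x y := G.dir x y ∧ ¬(x = a ∧ y = b)
  bi := G.bi
  bi_symm := G.bi_symm

/-- The DMG obtained by removing the bidirected edge `a ↔ b`. -/
def removeBi (G : DMG V) (a b : V) : DMG V where
  dir := G.dir
  bi x y := G.bi x y ∧ ¬((x = a ∧ y = b) ∨ (x = b ∧ y = a))
  bi_symm x y h := ⟨G.bi_symm _ _ h.1, fun hc => h.2 (by tauto)⟩

/-- The complete DMG: all directed and all bidirected edges present. -/
def IsComplete (G : DMG V) : Prop :=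
  (∀ a b, G.dir a b) ∧ (∀ a b, G.bi a b)

/-- A DMG is maximal if it is complete, or adding any (absent) edge changes the
induced independence model. -/
def IsMaximal (G : DMG V) : Prop :=
  G.IsComplete ∨
    ∀ a b : V, (¬ G.dir a b → ¬ MarkovEq (G.addDir a b) G) ∧
      (¬ G.bi a b → ¬ MarkovEq (G.addBi a b) G)

end DMG
namespace DMG

variable {V : Type u}

/-- An inducing path from `a` to `b`: a nontrivial path or cycle from `a` to
`b` with a head at `b`, with no noncolliders, and on which every node is an
ancestor of `a` or of `b`. -/
def IsInducingPath (G : DMG V) {a b : V} (w : Walk G a b) : Prop :=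
  w.Nontrivial ∧
  (w.nodes.Nodup ∨ (a = b ∧ w.nodes.dropLast.Nodup)) ∧
  w.lastHead = true ∧
  w.AllColliders ∧
  ∀ x ∈ w.nodes, G.anc x a ∨ G.anc x b

/-- A bidirected inducing path: an inducing path all of whose edges are bidirected. -/
def IsBidirectedIP (G : DMG V) {a b : V} (w : Walk G a b) : Prop :=
  G.IsInducingPath w ∧ w.AllBid

/-- A directed inducing path: an inducing path of the form `α → β` or
`α → γ₁ ↔ ⋯ ↔ γₙ ↔ β` with every `γᵢ` an ancestor of `β`. -/
def IsDirectedIP (G : DMG V) {a b : V} (w : Walk G a b) : Prop :=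
  G.IsInducingPath w ∧ w.UniForm ∧ ∀ x ∈ w.interior, G.anc x b

/-- There exists a nontrivial walk in `G` between `x` and `y` with no
colliders, all non-endpoint nodes in `M`, and with edge marks `hs` at `x`
(`true` = head) and `he` at `y`. -/
def ConnThrough (G : DMG V) (M : Set V) (x y : V) (hs he : Bool) : Prop :=
  ∃ w : Walk G x y, w.Nontrivial ∧ w.NoColliders ∧
    (∀ z ∈ w.interior, z ∈ M) ∧ w.firstHead = hs ∧ w.lastHead = he

/-- The latent projection `m(G, O)` of `G` on `O`: the DMG on node set `O`
having an edge (with given endpoint marks) between `α` and `β` if and only if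
`G` contains a nontrivial endpoint-identical walk between `α` and `β` with no
colliders and all non-endpoint nodes in `M = V ∖ O`. -/
def latentProj (G : DMG V) (O : Set V) : DMG {x : V // x ∈ O} where
  dir x y := ConnThrough G Oᶜ x.1 y.1 false true
  bi x y := ConnThrough G Oᶜ x.1 y.1 true true ∨ ConnThrough G Oᶜ y.1 x.1 true true
  bi_symm x y h := h.symm

/-- `x` is directedly collider-connected to `b`: there is a nontrivial walk
from `x` to `b` with a head at `b` on which every non-endpoint node is a
collider. -/
def dirCollConn (G : DMG V) (x b : V) : Prop :=
  ∃ w : Walk G x b, w.Nontrivial ∧ w.AllColliders ∧ w.lastHead = true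

/-- The set `D(a,b)` of nodes in `An({a,b})` directedly collider-connected to
`b`, except `a`. -/
def Dset (G : DMG V) (a b : V) : Set V :=
  {x | x ∈ G.anSet {a, b} ∧ G.dirCollConn x b} \ {a}

/-- `a` and `b` are potential siblings in the independence model `I(G)`. -/
def PotSib (G : DMG V) (a b : V) : Prop :=
  (G.inU b a ∧ G.inU a b) ∧
  (∀ (γ : V) (C : Set V), b ∈ C → muSep G {γ} {a} C → muSep G {γ} {b} C) ∧
  (∀ (γ : V) (C : Set V), a ∈ C → muSep G {γ} {b} C → muSep G {γ} {a} C)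

/-- `a` is a potential parent of `b` in the independence model `I(G)`. -/
def PotPar (G : DMG V) (a b : V) : Prop :=
  G.inU a b ∧
  (∀ (γ : V) (C : Set V), a ∉ C → muSep G {γ} {b} C → muSep G {γ} {a} C) ∧
  (∀ (γ δ : V) (C : Set V), a ∉ C → b ∈ C →
    muSep G {γ} {δ} C → muSep G {γ} {b} C ∨ muSep G {a} {δ} C) ∧
  (∀ (γ : V) (C : Set V), a ∉ C → muSep G {b} {γ} C → muSep G {b} {γ} (C ∪ {a}))

/-- The graph `N(I(G))`: directed edge `a → b` present iff `a` is a potential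
parent of `b` in `I(G)`, bidirected edge `a ↔ b` present iff `a` and `b` are
potential siblings in `I(G)` (potential siblinghood is symmetric). -/
def NGraph (G : DMG V) : DMG V where
  dir a b := G.PotPar a b
  bi a b := G.PotSib a b ∨ G.PotSib b a
  bi_symm _ _ h := h.symm

/-- A path is m-connecting given `C` if it is a path (no repeated nodes), no
noncollider on it is in `C` and every collider on it is in `An(C)`. -/
def Walk.MConn {G : DMG V} (C : Set V) : ∀ {a b : V}, Walk G a b → Prop
  | _, _, .nil _ => True
  | _, _, .cons s w =>
      (Walk.cons s w).nodes.Nodup ∧ Walk.openFrom C (G.anSet C) s.headEnd w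

/-- `A` and `B` are m-separated by `C`: there is no m-connecting path between
a node of `A` and a node of `B` given `C`. -/
def mSep (G : DMG V) (A B C : Set V) : Prop :=
  ∀ ⦃a b : V⦄, a ∈ A → b ∈ B →
    (∀ w : Walk G a b, ¬ w.MConn C) ∧ (∀ w : Walk G b a, ¬ w.MConn C)

/-- Auxiliary directed-edge relation of the `B`-history version of `G`. -/
def histDir (G : DMG V) (B : Set V) : (V ⊕ {x : V // x ∈ B}) → (V ⊕ {x : V // x ∈ B}) → Prop
  | .inl u, .inl v => G.dir u v
  | .inl u, .inr v => G.dir u v.1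
  | _, _ => False

/-- Auxiliary bidirected-edge relation of the `B`-history version of `G`. -/
def histBi (G : DMG V) (B : Set V) : (V ⊕ {x : V // x ∈ B}) → (V ⊕ {x : V // x ∈ B}) → Prop
  | .inl u, .inl v => G.bi u v
  | .inl u, .inr v => G.bi u v.1
  | .inr u, .inl v => G.bi u.1 v
  | .inr _, .inr _ => False

/-- The `B`-history version `G(B)` of `G`: node set `V ⊔ Bᵖ`, whose subgraph
on `V` is `G`, with additionally `α ↔ βᵖ` whenever `α ↔ β` in `G` and
`α → βᵖ` whenever `α → β` in `G` (for `α ∈ V`, `β ∈ B`). -/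
def hist (G : DMG V) (B : Set V) : DMG (V ⊕ {x : V // x ∈ B}) where
  dir := G.histDir B
  bi := G.histBi B
  bi_symm x y h := by
    cases x <;> cases y <;>
      simp only [histBi] at h ⊢ <;>
      first
        | exact G.bi_symm _ _ h
        | exact h

end DMG

/-!
If a node `x` occurs twice before the end of a μ-connecting walk, cutting out the closed
subwalk between the two occurrences leaves a μ-connecting walk. Only the condition at `x`
changes, and it can fail only if `x` becomes a collider although neither old occurrence was
one. Then the closed subwalk leaves `x` along a directed edge `x → ⋯`; following it forward,
either some edge turns back, creating a collider in `An(C)` downstream of `x`, or the subwalk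
returns to `x` with a head, making the second occurrence a collider. Either way `x ∈ An(C)`.
Repeating this until no node before the end repeats yields the route.
-/

namespace DMG.Walk

variable {V : Type u} {G : DMG V}

def append : ∀ {a b c : V}, Walk G a b → Walk G b c → Walk G a c
  | _, _, _, .nil _, v => v
  | _, _, _, .cons s u, v => .cons s (u.append v)

lemma edges_append : ∀ {a b c : V} (u : Walk G a b) (v : Walk G b c),
    (u.append v).edges = u.edges ++ v.edges
  | _, _, _, .nil _, _ => rfl
  | _, _, _, .cons s u, v => congrArg (s.edge :: ·) (edges_append u v)

lemma nodes_cons_dropLast {a m b : V} (s : Step G a m) (w : Walk G m b) :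
    (Walk.cons s w).nodes.dropLast = a :: w.nodes.dropLast := by
  cases w <;> simp [nodes]

lemma dropLast_nodes_append_end : ∀ {a b : V} (w : Walk G a b),
    w.nodes.dropLast ++ [b] = w.nodes
  | _, _, .nil _ => rfl
  | _, _, .cons s w => by
      rw [nodes_cons_dropLast, List.cons_append, dropLast_nodes_append_end w]
      rfl

def lastHeadFrom (h : Bool) : ∀ {a b : V}, Walk G a b → Bool
  | _, _, .nil _ => h
  | _, _, .cons s u => lastHeadFrom s.headEnd u

lemma lastHead_eq_lastHeadFrom : ∀ {a b : V} (w : Walk G a b),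
    w.lastHead = w.lastHeadFrom false
  | _, _, .nil _ => rfl
  | _, _, .cons _ (.nil _) => rfl
  | _, _, .cons _ (.cons t w) => lastHead_eq_lastHeadFrom (.cons t w)

lemma lastHeadFrom_append : ∀ {a b c : V} (h : Bool) (u : Walk G a b) (v : Walk G b c),
    (u.append v).lastHeadFrom h = v.lastHeadFrom (u.lastHeadFrom h)
  | _, _, _, _, .nil _, _ => rfl
  | _, _, _, _, .cons s u, v => lastHeadFrom_append s.headEnd u v

lemma Nontrivial.lastHeadFrom_eq {a b : V} {w : Walk G a b} (hw : w.Nontrivial)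
    (h h' : Bool) : w.lastHeadFrom h = w.lastHeadFrom h' := by
  cases w with
  | nil => exact hw.elim
  | cons => rfl

def OpenAt (C A : Set V) (hIn hOut : Bool) (x : V) : Prop :=
  if hIn && hOut then x ∈ A else x ∉ C

lemma openFrom_cons {C A : Set V} {h : Bool} {a m b : V} (s : Step G a m) (w : Walk G m b) :
    openFrom C A h (Walk.cons s w) ↔ OpenAt C A h s.headStart a ∧ openFrom C A s.headEnd w :=
  Iff.rfl

lemma openFrom_append {C A : Set V} : ∀ {a b c : V} (h : Bool) (u : Walk G a b)
    (v : Walk G b c), openFrom C A h (u.append v) ↔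
      openFrom C A h u ∧ openFrom C A (u.lastHeadFrom h) v
  | _, _, _, _, .nil _, _ => ⟨fun h => ⟨trivial, h⟩, And.right⟩
  | _, _, _, _, .cons s u, v => by
      simp only [append, openFrom_cons, openFrom_append s.headEnd u v, lastHeadFrom, and_assoc]

lemma muConn_iff {C : Set V} {a b : V} (w : Walk G a b) :
    w.MuConn C ↔ openFrom C (G.anSet C) false w ∧ w.lastHeadFrom false = true := by
  cases w with
  | nil => simp [MuConn, lastHeadFrom]
  | cons s w =>
      simp [MuConn, openFrom_cons, OpenAt, lastHead_eq_lastHeadFrom, lastHeadFrom, and_assoc]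

lemma mem_anSet_of_dir {C : Set V} {x y : V} (hxy : G.dir x y) (hy : y ∈ G.anSet C) :
    x ∈ G.anSet C :=
  let ⟨c, hc, hyc⟩ := hy
  ⟨c, hc, Relation.ReflTransGen.head hxy hyc⟩

lemma mem_anSet_of_openFrom_true {C : Set V} : ∀ {a b : V} (w : Walk G a b),
    openFrom C (G.anSet C) true w → w.lastHeadFrom true = false → a ∈ G.anSet C
  | _, _, .nil _, _, hlast => Bool.noConfusion hlast
  | _, _, .cons (.dirF hd) w, hw, hlast =>
      mem_anSet_of_dir hd (mem_anSet_of_openFrom_true w hw.2 hlast)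
  | _, _, .cons (.dirB _) _, hw, _ => hw.1
  | _, _, .cons (.bid _) _, hw, _ => hw.1

lemma openAt_of_openFrom_loop {C : Set V} {x : V} {m o : Bool} (w : Walk G x x)
    (hw : openFrom C (G.anSet C) m w)
    (hx : OpenAt C (G.anSet C) (w.lastHeadFrom m) o x) : OpenAt C (G.anSet C) m o x := by
  cases w with
  | nil => exact hx
  | cons s u =>
    cases m <;> cases o
    case false.true => simpa [OpenAt] using hw.1
    case true.true =>
      cases hlast : (Walk.cons s u).lastHeadFrom true
      · exact mem_anSet_of_openFrom_true _ hw hlast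
      · simpa [OpenAt, hlast] using hx
    all_goals simpa [OpenAt] using hx

lemma openFrom_of_openFrom_loop {C : Set V} {x b : V} {m : Bool} {w : Walk G x x}
    {v : Walk G x b} (hw : openFrom C (G.anSet C) m w)
    (hv : openFrom C (G.anSet C) (w.lastHeadFrom m) v) : openFrom C (G.anSet C) m v := by
  cases v with
  | nil => trivial
  | cons s v => exact ⟨openAt_of_openFrom_loop w hw hv.1, hv.2⟩

lemma MuConn.splice {C : Set V} {a x b : V} {w₁ : Walk G a x} {w₂ : Walk G x x}
    {w₃ : Walk G x b} (hw : (w₁.append (w₂.append w₃)).MuConn C) (h₃ : w₃.Nontrivial) :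
    (w₁.append w₃).MuConn C := by
  simp only [muConn_iff, openFrom_append, lastHeadFrom_append] at hw ⊢
  obtain ⟨⟨hw₁, hw₂, hw₃⟩, hlast⟩ := hw
  exact ⟨⟨hw₁, openFrom_of_openFrom_loop hw₂ hw₃⟩,
    (h₃.lastHeadFrom_eq _ _).trans hlast⟩

lemma exists_eq_append_of_mem_dropLast : ∀ {a b : V} (w : Walk G a b) {x : V},
    x ∈ w.nodes.dropLast → ∃ (u : Walk G a x) (v : Walk G x b), w = u.append v ∧ v.Nontrivial
  | _, _, .nil _, _, hx => by simp [nodes] at hx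
  | _, _, .cons s w, x, hx => by
      rw [nodes_cons_dropLast] at hx
      obtain rfl | hx := List.mem_cons.mp hx
      · exact ⟨.nil x, .cons s w, rfl, trivial⟩
      · obtain ⟨u, v, rfl, hv⟩ := exists_eq_append_of_mem_dropLast w hx
        exact ⟨.cons s u, v, rfl, hv⟩

lemma exists_eq_append_loop_of_not_nodup : ∀ {a b : V} (w : Walk G a b),
    ¬ w.nodes.dropLast.Nodup → ∃ (x : V) (w₁ : Walk G a x) (w₂ : Walk G x x)
      (w₃ : Walk G x b), w = w₁.append (w₂.append w₃) ∧ w₂.Nontrivial ∧ w₃.Nontrivial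
  | _, _, .nil _, hw => absurd (by simp [nodes]) hw
  | a, _, .cons s w, hw => by
      rw [nodes_cons_dropLast, List.nodup_cons, not_and_or, not_not] at hw
      by_cases ha : a ∈ w.nodes.dropLast
      · obtain ⟨u, v, rfl, hv⟩ := exists_eq_append_of_mem_dropLast w ha
        exact ⟨a, .nil a, .cons s u, v, rfl, trivial, hv⟩
      · obtain ⟨x, w₁, w₂, w₃, rfl, h₂, h₃⟩ :=
          exists_eq_append_loop_of_not_nodup w (hw.resolve_left ha)
        exact ⟨x, .cons s w₁, w₂, w₃, rfl, h₂, h₃⟩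

lemma MuConn.exists_nodup_dropLast {C : Set V} {a b : V} {w : Walk G a b}
    (hw : w.MuConn C) :
    ∃ r : Walk G a b, r.MuConn C ∧ r.edges ⊆ w.edges ∧ r.nodes.dropLast.Nodup := by
  induction hn : w.edges.length using Nat.strong_induction_on generalizing w with
  | _ n ih =>
    by_cases hnd : w.nodes.dropLast.Nodup
    · exact ⟨w, hw, List.Subset.refl _, hnd⟩
    obtain ⟨x, w₁, w₂, w₃, rfl, h₂, h₃⟩ := exists_eq_append_loop_of_not_nodup w hnd
    have hlen : (w₁.append w₃).edges.length < n := by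
      cases w₂ with
      | nil => exact h₂.elim
      | cons => simp [← hn, edges_append, edges]
    obtain ⟨r, hr, hsub, hnodup⟩ := ih _ hlen (hw.splice h₃) rfl
    refine ⟨r, hr, fun e he => ?_, hnodup⟩
    have he' := hsub he
    simp only [edges_append, List.mem_append] at he' ⊢
    tauto

lemma count_nodes_le_of_nodup_dropLast [DecidableEq V] {a b : V} {r : Walk G a b}
    (hr : r.nodes.dropLast.Nodup) (x : V) : r.nodes.count x ≤ 1 + [b].count x := by
  rw [← dropLast_nodes_append_end, List.count_append]
  exact Nat.add_le_add_right (List.nodup_iff_count_le_one.mp hr x) _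

end DMG.Walk

theorem stmt1_general {V : Type u} [DecidableEq V] (G : DMG V) (a b : V)
    (C : Set V) (w : DMG.Walk G a b) (hw : w.MuConn C) :
    ∃ r : DMG.Walk G a b, r.MuConn C ∧
      (∀ e ∈ r.edges, e ∈ w.edges) ∧
      (∀ x : V, x ≠ b → r.nodes.count x ≤ 1) ∧
      r.nodes.count b ≤ 2 := by
  obtain ⟨r, hr, hsub, hnodup⟩ := hw.exists_nodup_dropLast
  refine ⟨r, hr, hsub, fun x hx => ?_, ?_⟩
  · simpa [List.count_singleton, hx.symm] using r.count_nodes_le_of_nodup_dropLast hnodup x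
  · simpa using r.count_nodes_le_of_nodup_dropLast hnodup b

/-- Proposition 2: if `w` is a μ-connecting walk from `a` to
`b` given `C`, then there is a μ-connecting route from `a` to `b` given `C`
consisting of edges of `w` (a route: no node other than `b` occurs more than
once, and `b` occurs at most twice). -/
theorem stmt1 {V : Type u} [Fintype V] [DecidableEq V] (G : DMG V) (a b : V)
    (C : Set V) (w : DMG.Walk G a b) (hw : w.MuConn C) :
    ∃ r : DMG.Walk G a b, r.MuConn C ∧
      (∀ e ∈ r.edges, e ∈ w.edges) ∧
      (∀ x : V, x ≠ b → r.nodes.count x ≤ 1) ∧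
      r.nodes.count b ≤ 2 :=
  stmt1_general G a b C w hw
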